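/- Let B ⊆ ℤ \ {0} and let T_B = {r i : i ∉ B} ∪ {sr i : i ∈ B} be the corresponding normalized right transversal of H = {r 0, sr 0} in D_∞ = DihedralGroup 0. For x, y ∈ T_B with coset indices i and j respectively (x ∈ {r i, sr i}, y ∈ {r j, sr j}), the unique element of T_B lying in the right coset H·(x·y) has index i ∘' j, where i ∘' j = i + j if j ∉ B and i ∘' j = j − i if j ∈ B. Consequently, the index map T_B → ℤ (r i ↦ i, sr i ↦ i) is an isomorphism from the right loop (T_B, ∘) with the transversal-induced operation onto the right loop ℤ^B. -/

import Mathlib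

/-- The coset index of an element of the infinite dihedral group `DihedralGroup 0`:
both `r i` and `sr i` have index `i`. -/
def cosetIdx : DihedralGroup 0 → ℤ
  | .r i => i
  | .sr i => i

/-- The subgroup `H = {r 0, sr 0}` of `DihedralGroup 0`, as a set. -/
def Hset : Set (DihedralGroup 0) := {DihedralGroup.r 0, DihedralGroup.sr 0}

/-- The normalized right transversal of `Hset` determined by `B ⊆ ℤ \ {0}`:
`T_B = {r i : i ∉ B} ∪ {sr i : i ∈ B}`. -/
def TB (B : Set ℤ) : Set (DihedralGroup 0) :=
  {x | match x with
    | .r i => i ∉ B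
    | .sr i => i ∈ B}

/-!
The index of `x * y` is `i + j` when `y = r j` and `j - i` when `y = sr j`, where `i` is the
index of `x`, and left multiplication by `r 0` or `sr 0` never changes an index. Since `y ∈ T_B`
is `r j` exactly when `j ∉ B`, the index of the coset `H(xy)` is `i ∘' j`. Each coset index `i`
is hit by exactly one element of `T_B`, namely `sr i` or `r i` according to whether `i ∈ B`.
-/

open DihedralGroup

theorem cosetIdx_mul_of_mem_Hset {h : DihedralGroup 0} (hh : h ∈ Hset) (g : DihedralGroup 0) :
    cosetIdx (h * g) = cosetIdx g := by
  rcases hh with rfl | rfl <;> rcases g with j | j <;>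
    simp only [r_mul_r, r_mul_sr, sr_mul_r, sr_mul_sr, cosetIdx, zero_add, sub_zero] <;> rfl

theorem cosetIdx_mul_r (x : DihedralGroup 0) (j : ℤ) : cosetIdx (x * r j) = cosetIdx x + j := by
  rcases x with i | i <;> rfl

theorem cosetIdx_mul_sr (x : DihedralGroup 0) (j : ℤ) : cosetIdx (x * sr j) = j - cosetIdx x := by
  rcases x with i | i <;> rfl

theorem injOn_cosetIdx_TB (B : Set ℤ) : Set.InjOn cosetIdx (TB B) := by
  rintro (i | i) hi (j | j) hj (rfl : i = j)
  · rfl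
  · exact absurd hj hi
  · exact absurd hi hj
  · rfl

theorem surjOn_cosetIdx_TB (B : Set ℤ) : Set.SurjOn cosetIdx (TB B) Set.univ := by
  intro i _
  by_cases hi : i ∈ B
  · exact ⟨sr i, hi, rfl⟩
  · exact ⟨r i, hi, rfl⟩

theorem dihedral_transversal_iso_ZB_general (B : Set ℤ)
    (op' : ℤ → ℤ → ℤ)
    (hop' : ∀ i j : ℤ, (j ∉ B → op' i j = i + j) ∧ (j ∈ B → op' i j = j - i)) :
    (∀ x ∈ TB B, ∀ y ∈ TB B, ∀ z ∈ TB B,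
      (∃ h ∈ Hset, z = h * (x * y)) → cosetIdx z = op' (cosetIdx x) (cosetIdx y)) ∧
    Function.Bijective (fun t : TB B => cosetIdx t.1) := by
  refine ⟨?_, Set.injOn_iff_injective.mp (injOn_cosetIdx_TB B),
    Set.surjOn_iff_surjective.mp (surjOn_cosetIdx_TB B)⟩
  rintro x - y hy z - ⟨h, hh, rfl⟩
  rw [cosetIdx_mul_of_mem_Hset hh]
  rcases y with j | j
  · exact (cosetIdx_mul_r x j).trans ((hop' _ j).1 hy).symm
  · exact (cosetIdx_mul_sr x j).trans ((hop' _ j).2 hy).symm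

/-- For B ⊆ ℤ \ {0} and the normalized right transversal T_B of
H = {r 0, sr 0} in D_∞, if x, y ∈ T_B have coset indices i, j then the unique element
of T_B in the right coset H·(x·y) has index i ∘' j, where i ∘' j = i + j if j ∉ B and
i ∘' j = j - i if j ∈ B.  Consequently the index map is an isomorphism of right loops
from (T_B, ∘) onto ℤ^B: it is a bijection T_B → ℤ carrying the transversal-induced
operation to ∘'. -/
theorem dihedral_transversal_iso_ZB (B : Set ℤ) (hB : B ⊆ {i | i ≠ 0})
    (op' : ℤ → ℤ → ℤ)
    (hop' : ∀ i j : ℤ, (j ∉ B → op' i j = i + j) ∧ (j ∈ B → op' i j = j - i)) :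
    (∀ x ∈ TB B, ∀ y ∈ TB B, ∀ z ∈ TB B,
      (∃ h ∈ Hset, z = h * (x * y)) → cosetIdx z = op' (cosetIdx x) (cosetIdx y)) ∧
    Function.Bijective (fun t : TB B => cosetIdx t.1) :=
  dihedral_transversal_iso_ZB_general B op' hop'
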